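/- arXiv:2208.06310 — 2 statements merged into one kernel-verified Lean document; each statement's English description precedes it below -/
import Mathlib

section
/- Let n ≥ 1, η ∈ ℝⁿ with all ηᵢ > 0, v ∈ ℝⁿ, and c ∈ ℝⁿ with cᵢ·vᵢ ≥ 0 for all i and c_{i₀}·v_{i₀} > 0 for some index i₀. Then the function t ↦ ∏ᵢ (ηᵢ + t·vᵢ)^{cᵢ} is strictly increasing on the open interval of t-values for which ηᵢ + t·vᵢ > 0 for all i. -/
theorem stmt_13 (n : ℕ) (hn : 1 ≤ n) (η v c : Fin n → ℝ)
    (hη : ∀ i, 0 < η i) (hcv : ∀ i, 0 ≤ c i * v i) (hex : ∃ i₀, 0 < c i₀ * v i₀) :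
    StrictMonoOn (fun t : ℝ => ∏ i, (η i + t * v i) ^ (c i))
      {t : ℝ | ∀ i, 0 < η i + t * v i} := by
  intro s hs t ht hst
  simp only [Set.mem_setOf_eq] at hs ht
  have hle : ∀ i, (η i + s * v i) ^ (c i) ≤ (η i + t * v i) ^ (c i) := by
    intro i
    rcases lt_trichotomy (v i) 0 with hv | hv | hv
    · have hc : c i ≤ 0 := nonpos_of_mul_nonneg_right (by nlinarith [hcv i]) hv
      exact Real.rpow_le_rpow_of_nonpos (ht i) (by nlinarith) hc
    · simp [hv]
    · have hc : 0 ≤ c i := nonneg_of_mul_nonneg_right (mul_comm (c i) (v i) ▸ hcv i) hv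
      exact Real.rpow_le_rpow (hs i).le (by nlinarith) hc
  obtain ⟨i₀, hi₀⟩ := hex
  have hlt : (η i₀ + s * v i₀) ^ (c i₀) < (η i₀ + t * v i₀) ^ (c i₀) := by
    rcases lt_trichotomy (v i₀) 0 with hv | hv | hv
    · have hc : c i₀ < 0 := by nlinarith
      exact Real.rpow_lt_rpow_of_neg (ht i₀) (by nlinarith) hc
    · simp [hv] at hi₀
    · have hc : 0 < c i₀ := by nlinarith
      exact Real.rpow_lt_rpow (hs i₀).le (by nlinarith) hc
  exact Finset.prod_lt_prod (fun i _ => Real.rpow_pos_of_pos (hs i) _)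
    (fun i _ => hle i) ⟨i₀, Finset.mem_univ _, hlt⟩
end

section
/- Let P and N be finite disjoint nonempty index sets, let κ_k > 0 for all k ∈ P ∪ N, let c ∈ ℝ, and let p_k < 0 for k ∈ P and p_l > 0 for l ∈ N be pairwise distinct reals. Fix η₁, η₂ > 0 with η₁ ≠ η₂ and set r(t) = (η₁ + t)/(η₂ + t). Then the function h(t) = Σ_{k∈P} κ_k r(t)^{p_k} + c − Σ_{l∈N} κ_l r(t)^{p_l}, defined on the interval where η₁ + t > 0 and η₂ + t > 0, is strictly monotone; in particular h has at most one zero on that interval. -/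
theorem stmt_16 {ι : Type*} [DecidableEq ι] (P N : Finset ι) (hdisj : Disjoint P N)
    (hP : P.Nonempty) (hN : N.Nonempty)
    (κ : ι → ℝ) (hκ : ∀ k ∈ P ∪ N, 0 < κ k) (c : ℝ) (p : ι → ℝ)
    (hpP : ∀ k ∈ P, p k < 0) (hpN : ∀ l ∈ N, 0 < p l)
    (hinj : Set.InjOn p ↑(P ∪ N))
    (η₁ η₂ : ℝ) (hη₁ : 0 < η₁) (hη₂ : 0 < η₂) (hne : η₁ ≠ η₂)
    (h : ℝ → ℝ)
    (hdef : ∀ t : ℝ, 0 < η₁ + t → 0 < η₂ + t →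
      h t = ∑ k ∈ P, κ k * ((η₁ + t) / (η₂ + t)) ^ (p k) + c
            - ∑ l ∈ N, κ l * ((η₁ + t) / (η₂ + t)) ^ (p l)) :
    (StrictMonoOn h {t : ℝ | 0 < η₁ + t ∧ 0 < η₂ + t} ∨
     StrictAntiOn h {t : ℝ | 0 < η₁ + t ∧ 0 < η₂ + t}) ∧
    {t ∈ {t : ℝ | 0 < η₁ + t ∧ 0 < η₂ + t} | h t = 0}.Subsingleton := by
  set S := {t : ℝ | 0 < η₁ + t ∧ 0 < η₂ + t}
  -- g is strictly antitone on (0, ∞)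
  have hg : ∀ x y : ℝ, 0 < x → x < y →
      (∑ k ∈ P, κ k * y ^ (p k) + c - ∑ l ∈ N, κ l * y ^ (p l)) <
      (∑ k ∈ P, κ k * x ^ (p k) + c - ∑ l ∈ N, κ l * x ^ (p l)) := by
    intro x y hx hxy
    have h1 : ∑ k ∈ P, κ k * y ^ (p k) < ∑ k ∈ P, κ k * x ^ (p k) := by
      refine Finset.sum_lt_sum_of_nonempty hP fun k hk => ?_
      have := Real.rpow_lt_rpow_of_neg hx hxy (hpP k hk)
      exact mul_lt_mul_of_pos_left this (hκ k (Finset.mem_union_left _ hk))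
    have h2 : ∑ l ∈ N, κ l * x ^ (p l) < ∑ l ∈ N, κ l * y ^ (p l) := by
      refine Finset.sum_lt_sum_of_nonempty hN fun l hl => ?_
      have := Real.rpow_lt_rpow hx.le hxy (hpN l hl)
      exact mul_lt_mul_of_pos_left this (hκ l (Finset.mem_union_right _ hl))
    linarith
  have hr : ∀ t ∈ S, 0 < (η₁ + t) / (η₂ + t) := fun t ht => div_pos ht.1 ht.2
  have key : ∀ s ∈ S, ∀ t ∈ S, s < t →
      (η₂ < η₁ → h s < h t) ∧ (η₁ < η₂ → h t < h s) := by
    intro s hs t ht hst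
    rw [hdef s hs.1 hs.2, hdef t ht.1 ht.2]
    constructor
    · intro hlt
      have : (η₁ + t) / (η₂ + t) < (η₁ + s) / (η₂ + s) := by
        rw [div_lt_div_iff₀ ht.2 hs.2]; nlinarith
      exact hg _ _ (hr t ht) this
    · intro hlt
      have : (η₁ + s) / (η₂ + s) < (η₁ + t) / (η₂ + t) := by
        rw [div_lt_div_iff₀ hs.2 ht.2]; nlinarith
      exact hg _ _ (hr s hs) this
  have hmono : StrictMonoOn h S ∨ StrictAntiOn h S := by
    rcases hne.lt_or_gt with hlt | hlt
    · exact Or.inr fun s hs t ht hst => (key s hs t ht hst).2 hlt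
    · exact Or.inl fun s hs t ht hst => (key s hs t ht hst).1 hlt
  refine ⟨hmono, ?_⟩
  have hinj' : Set.InjOn h S := hmono.elim StrictMonoOn.injOn StrictAntiOn.injOn
  intro a ha b hb
  exact hinj' ha.1 hb.1 (ha.2.trans hb.2.symm)
end
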